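/- arXiv:1408.5606 — 9 statements merged into one kernel-verified Lean document; each statement's English description precedes it below -/
import Mathlib

section
/- Every infinite group G of cardinality κ can be partitioned into κ pairwise disjoint left ℵ₁-large subsets, i.e., there is a family of κ pairwise disjoint subsets covering G, each of which satisfies G = F·A for some countable set F ⊆ G. -/
/-!
Countable groups are partitioned into singletons. For `#G = κ > ℵ₀`, enumerate `G` along the
initial ordinal of `κ` and build a well-ordered exhaustive chain of subgroups `stage i` of size
`< κ`, all containing a fixed countably infinite subgroup `K`, such that each `stage i` contains an
element `tᵢ` outside the union `below i` of the earlier stages. Choosing representatives of the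
right cosets of `below i` gives retractions `ρᵢ : G → stage i` that are left `stage i`-equivariant
and coherent (`ρᵢ ∘ ρⱼ = ρᵢ` for `i ≤ j`), and for each `g` only finitely many `ρᵢ g` lie outside
`below i`. By recursion on `i`, choose from each right coset of `Mᵢ = ⟨K, tᵢ⟩` a seed outside
`below i` whose retractions avoid all earlier seeds; the `K`-translates of one point offer
infinitely many choices, of which only finitely many are bad. The pieces `ρᵢ⁻¹(seeds i)` are
disjoint by coherence, and `Mᵢ` times a piece is `G` by equivariance.
-/

open Pointwise Cardinal Set Function

attribute [local instance] WellFoundedLT.toWellFoundedRelation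

namespace Subgroup

variable {G : Type*} [Group G]

theorem cardinalMk_closure_le_max (s : Set G) : #(closure s) ≤ max #s ℵ₀ := by
  rw [FreeGroup.closure_eq_range]
  refine mk_range_le.trans ?_
  rcases isEmpty_or_nonempty s with hs | hs
  · exact mk_le_aleph0.trans (le_max_right _ _)
  · exact (mk_freeGroup s).le

theorem countable_closure {s : Set G} (hs : s.Countable) : (closure s : Set G).Countable :=
  le_aleph0_iff_set_countable.1 <| (cardinalMk_closure_le_max s).trans (max_le hs.le_aleph0 le_rfl)

theorem exists_notMem_closure_of_max_lt {s : Set G} (hs : max #s ℵ₀ < #G) :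
    ∃ g, g ∉ closure s := by
  by_contra! h
  have hle := cardinalMk_closure_le_max s
  rw [← SetLike.coe_sort_coe, eq_univ_of_forall h, mk_univ] at hle
  exact hle.not_gt hs

/-- The `H`-factor of `g = h * r`, where `r` is a fixed representative of the right coset `H g`. -/
noncomputable def cosetFactor (H : Subgroup G) (g : G) : G :=
  g * (Quotient.mk (QuotientGroup.rightRel H) g).out⁻¹

theorem cosetFactor_mem (H : Subgroup G) (g : G) : H.cosetFactor g ∈ H :=
  QuotientGroup.rightRel_apply.1 (Quotient.mk_out (s := QuotientGroup.rightRel H) g)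

theorem cosetFactor_mul {H : Subgroup G} {f : G} (hf : f ∈ H) (g : G) :
    H.cosetFactor (f * g) = f * H.cosetFactor g := by
  have : Quotient.mk (QuotientGroup.rightRel H) (f * g) = Quotient.mk _ g :=
    Quotient.sound (QuotientGroup.rightRel_apply.2 (by simpa using inv_mem hf))
  rw [cosetFactor, cosetFactor, this, mul_assoc]

end Subgroup

def IsLeftAleph1Large {G : Type*} [Mul G] (A : Set G) : Prop :=
  ∃ F : Set G, F.Countable ∧ F * A = Set.univ

theorem IsLeftAleph1Large.mono {G : Type*} [Mul G] {A B : Set G} (hA : IsLeftAleph1Large A)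
    (hAB : A ⊆ B) : IsLeftAleph1Large B := by
  obtain ⟨F, hF, hFA⟩ := hA
  exact ⟨F, hF, eq_univ_of_univ_subset (hFA ▸ mul_subset_mul_left hAB)⟩

theorem isLeftAleph1Large_of_forall_exists {G : Type*} [Group G] {A F : Set G} (hF : F.Countable)
    (h : ∀ g, ∃ f ∈ F, f⁻¹ * g ∈ A) : IsLeftAleph1Large A := by
  refine ⟨F, hF, eq_univ_of_forall fun g => ?_⟩
  obtain ⟨f, hf, hfg⟩ := h g
  exact ⟨f, hf, _, hfg, mul_inv_cancel_left f g⟩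

theorem exists_partition_of_pairwise_disjoint {α β : Type*} [Nonempty β] {P : β → Set α}
    (hP : Pairwise (Disjoint on P)) :
    ∃ A : β → Set α,
      Pairwise (Disjoint on A) ∧ ⋃ b, A b = Set.univ ∧ ∀ b, P b ⊆ A b := by
  obtain ⟨b₀⟩ := ‹Nonempty β›
  refine ⟨fun b => {x | x ∈ P b ∨ (b = b₀ ∧ ∀ c, x ∉ P c)}, fun a b hab => ?_, ?_,
    fun b x hx => Or.inl hx⟩
  · refine disjoint_left.2 ?_
    rintro x (ha | ⟨rfl, ha⟩) (hb | ⟨rfl, hb⟩)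
    · exact disjoint_left.1 (hP hab) ha hb
    · exact hb a ha
    · exact ha b hb
    · exact hab rfl
  · refine eq_univ_of_forall fun x => ?_
    by_cases hx : ∃ c, x ∈ P c
    · obtain ⟨c, hc⟩ := hx
      exact mem_iUnion.2 ⟨c, Or.inl hc⟩
    · exact mem_iUnion.2 ⟨b₀, Or.inr ⟨rfl, fun c hc => hx ⟨c, hc⟩⟩⟩

structure SubgroupChain (ι G : Type*) [LinearOrder ι] [Group G] where
  base : Subgroup G
  gen : ι → Set G
  exists_mem_gen (g : G) : ∃ i, g ∈ gen i

namespace SubgroupChain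

open Subgroup

variable {ι G : Type*} [LinearOrder ι] [Group G] (C : SubgroupChain ι G)

def stage (i : ι) : Subgroup G := closure (C.base ∪ ⋃ j ≤ i, C.gen j)

def below (i : ι) : Subgroup G := closure (C.base ∪ ⋃ j < i, C.gen j)

theorem base_le_below (i : ι) : C.base ≤ C.below i := fun _ hx => subset_closure (Or.inl hx)

theorem below_le_stage (i : ι) : C.below i ≤ C.stage i :=
  closure_mono <| union_subset_union_right _ <| iUnion₂_subset fun j hj =>
    subset_iUnion₂_of_subset j hj.le subset_rfl

theorem base_le_stage (i : ι) : C.base ≤ C.stage i :=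
  (C.base_le_below i).trans (C.below_le_stage i)

theorem gen_subset_stage (i : ι) : C.gen i ⊆ C.stage i :=
  fun _ hx => subset_closure (Or.inr (mem_iUnion₂.2 ⟨i, le_rfl, hx⟩))

theorem stage_le_below {i j : ι} (h : i < j) : C.stage i ≤ C.below j :=
  closure_mono <| union_subset_union_right _ <| iUnion₂_subset fun k hk =>
    subset_iUnion₂_of_subset k (hk.trans_lt h) subset_rfl

theorem stage_mono : Monotone C.stage := fun _ _ h =>
  closure_mono <| union_subset_union_right _ <| iUnion₂_subset fun k hk =>
    subset_iUnion₂_of_subset k (hk.trans h) subset_rfl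

theorem exists_mem_stage_of_mem_below {i j : ι} {x : G} (hx : x ∈ C.below j) (hij : i < j) :
    ∃ k, i ≤ k ∧ k < j ∧ x ∈ C.stage k := by
  have : Nonempty (Ico i j) := ⟨⟨i, le_rfl, hij⟩⟩
  have hdir : Directed (· ≤ ·) fun k : Ico i j => C.stage k :=
    (C.stage_mono.comp (Subtype.mono_coe _)).directed_le
  have hi : C.stage i ≤ ⨆ k : Ico i j, C.stage k :=
    le_iSup (fun k : Ico i j => C.stage k) ⟨i, le_rfl, hij⟩
  have hle : C.below j ≤ ⨆ k : Ico i j, C.stage k := by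
    refine (closure_le _).2 (union_subset ((C.base_le_stage i).trans hi) ?_)
    refine iUnion₂_subset fun k hk => (C.gen_subset_stage k).trans ?_
    rcases le_total k i with hki | hik
    · exact (C.stage_mono hki).trans hi
    · exact le_iSup (fun k : Ico i j => C.stage k) ⟨k, hik, hk⟩
  obtain ⟨⟨k, hik, hkj⟩, hk⟩ := (mem_iSup_of_directed hdir).1 (hle hx)
  exact ⟨k, hik, hkj, hk⟩

variable [WellFoundedLT ι]

noncomputable def rank (g : G) : ι :=
  (wellFounded_lt (α := ι)).min {i | g ∈ C.stage i}
    (let ⟨i, hi⟩ := C.exists_mem_gen g; ⟨i, C.gen_subset_stage i hi⟩)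

theorem rank_le_iff {g : G} {i : ι} : C.rank g ≤ i ↔ g ∈ C.stage i :=
  ⟨fun h => C.stage_mono h ((wellFounded_lt (α := ι)).min_mem {i | g ∈ C.stage i} _),
    fun h => (wellFounded_lt (α := ι)).min_le h⟩

theorem lt_rank_iff {g : G} {i : ι} : i < C.rank g ↔ g ∉ C.stage i := by
  rw [← not_le, rank_le_iff]

theorem mem_stage_rank (g : G) : g ∈ C.stage (C.rank g) := C.rank_le_iff.1 le_rfl

theorem rank_eq_of_notMem_below {g : G} {i : ι} (hs : g ∈ C.stage i) (hb : g ∉ C.below i) :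
    C.rank g = i :=
  (C.rank_le_iff.2 hs).antisymm <| not_lt.1 fun h => hb (C.stage_le_below h (C.mem_stage_rank g))

theorem rank_mul {f g : G} (hf : f ∈ C.below (C.rank g)) : C.rank (f * g) = C.rank g := by
  refine (C.rank_le_iff.2 (mul_mem (C.below_le_stage _ hf) (C.mem_stage_rank g))).antisymm ?_
  by_contra! h
  obtain ⟨k, hk, hkg, hfk⟩ := C.exists_mem_stage_of_mem_below hf h
  have hg : g = f⁻¹ * (f * g) := by group
  refine (C.lt_rank_iff.1 hkg) ?_
  rw [hg]
  exact mul_mem (inv_mem hfk) (C.stage_mono hk (C.mem_stage_rank _))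

noncomputable def peel (g : G) : G := (C.below (C.rank g)).cosetFactor g

theorem rank_peel_lt {g : G} {i : ι} (h : g ∉ C.stage i) : C.rank (C.peel g) < C.rank g := by
  obtain ⟨k, -, hkg, hk⟩ := C.exists_mem_stage_of_mem_below
    ((C.below (C.rank g)).cosetFactor_mem g) (C.lt_rank_iff.2 h)
  exact (C.rank_le_iff.2 hk).trans_lt hkg

theorem peel_mul {f g : G} (hf : f ∈ C.below (C.rank g)) : C.peel (f * g) = f * C.peel g := by
  rw [peel, peel, C.rank_mul hf, cosetFactor_mul hf]

open Classical in
noncomputable def retract (i : ι) (g : G) : G :=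
  if g ∈ C.stage i then g else retract i (C.peel g)
termination_by C.rank g
decreasing_by exact C.rank_peel_lt ‹_›

theorem retract_of_mem {i : ι} {g : G} (h : g ∈ C.stage i) : C.retract i g = g := by
  rw [retract, if_pos h]

theorem retract_of_notMem {i : ι} {g : G} (h : g ∉ C.stage i) :
    C.retract i g = C.retract i (C.peel g) := by
  rw [retract, if_neg h]

theorem retract_mul {i : ι} {f : G} (hf : f ∈ C.stage i) (g : G) :
    C.retract i (f * g) = f * C.retract i g := by
  fun_induction C.retract i g with
  | case1 g h => rw [C.retract_of_mem (mul_mem hf h)]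
  | case2 g h ih =>
    have hfg : f * g ∉ C.stage i := fun hfg => h (by simpa using mul_mem (inv_mem hf) hfg)
    rw [C.retract_of_notMem hfg, C.peel_mul (C.stage_le_below (C.lt_rank_iff.2 h) hf), ih]

theorem retract_retract {i i' : ι} (h : i ≤ i') (g : G) :
    C.retract i (C.retract i' g) = C.retract i g := by
  fun_induction C.retract i' g with
  | case1 g _ => rfl
  | case2 g hg ih => rw [ih, C.retract_of_notMem fun hi => hg (C.stage_mono h hi)]

theorem finite_setOf_retract_notMem_below (g : G) :
    {i | C.retract i g ∉ C.below i}.Finite := by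
  induction g using (InvImage.wf C.rank wellFounded_lt).induction with
  | _ g ih =>
  have key : {i | C.retract i g ∉ C.below i} ⊆
      insert (C.rank g) {i | g ∉ C.stage i ∧ C.retract i (C.peel g) ∉ C.below i} := by
    intro i (hi : C.retract i g ∉ C.below i)
    by_cases hg : g ∈ C.stage i
    · rw [C.retract_of_mem hg] at hi
      exact Or.inl (C.rank_eq_of_notMem_below hg hi).symm
    · rw [C.retract_of_notMem hg] at hi
      exact Or.inr ⟨hg, hi⟩
  refine (Finite.insert _ ?_).subset key
  by_cases hg : ∃ i₀, g ∉ C.stage i₀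
  · obtain ⟨i₀, hi₀⟩ := hg
    exact (ih _ (C.rank_peel_lt hi₀)).subset fun i hi => hi.2
  · exact finite_empty.subset fun i hi => hg ⟨i, hi.1⟩

end SubgroupChain

structure StrictSubgroupChain (ι G : Type*) [LinearOrder ι] [Group G]
    extends SubgroupChain ι G where
  new : ι → G
  new_mem_gen (i : ι) : new i ∈ gen i
  new_notMem_below (i : ι) : new i ∉ toSubgroupChain.below i

namespace StrictSubgroupChain

open Subgroup

variable {ι G : Type*} [LinearOrder ι] [Group G] (C : StrictSubgroupChain ι G)

def stepGroup (i : ι) : Subgroup G := closure (insert (C.new i) C.base)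

theorem base_le_stepGroup (i : ι) : C.base ≤ C.stepGroup i :=
  fun _ hx => subset_closure (mem_insert_of_mem _ hx)

theorem new_mem_stepGroup (i : ι) : C.new i ∈ C.stepGroup i := subset_closure (mem_insert _ _)

theorem stepGroup_le_stage (i : ι) : C.stepGroup i ≤ C.stage i :=
  (closure_le _).2 <| insert_subset (C.gen_subset_stage i (C.new_mem_gen i)) (C.base_le_stage i)

theorem countable_stepGroup (hK : (C.base : Set G).Countable) (i : ι) :
    (C.stepGroup i : Set G).Countable :=
  countable_closure (hK.insert _)

theorem exists_mul_inv_mem_stepGroup_notMem_below (i : ι) (y : G) :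
    ∃ z, z * y⁻¹ ∈ C.stepGroup i ∧ z ∉ C.below i := by
  by_cases hy : y ∈ C.below i
  · refine ⟨C.new i * y, by simpa using C.new_mem_stepGroup i, fun h => ?_⟩
    exact C.new_notMem_below i ((mul_mem_cancel_right hy).1 h)
  · exact ⟨y, by simp, hy⟩

variable [WellFoundedLT ι]

noncomputable def seeds (i : ι) : Set G :=
  range fun y => Classical.epsilon fun p =>
    p * y⁻¹ ∈ C.stepGroup i ∧ p ∉ C.below i ∧ ∀ j < i, C.retract j p ∉ seeds j
termination_by i

def candidates (i : ι) (y : G) : Set G :=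
  {p | p * y⁻¹ ∈ C.stepGroup i ∧ p ∉ C.below i ∧ ∀ j < i, C.retract j p ∉ C.seeds j}

noncomputable def seed (i : ι) (y : G) : G := Classical.epsilon (· ∈ C.candidates i y)

theorem seeds_eq (i : ι) : C.seeds i = range (C.seed i) := by
  rw [seeds]
  rfl

theorem candidates_congr {i : ι} {y y' : G} (h : y * y'⁻¹ ∈ C.stepGroup i) :
    C.candidates i y = C.candidates i y' := by
  ext p
  have : p * y'⁻¹ = p * y⁻¹ * (y * y'⁻¹) := by group
  simp only [candidates, mem_ofPred_eq, this, mul_mem_cancel_right h]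

theorem seed_congr {i : ι} {y y' : G} (h : y * y'⁻¹ ∈ C.stepGroup i) :
    C.seed i y = C.seed i y' := by
  rw [seed, seed, C.candidates_congr h]

theorem seed_seed {j : ι} (hj : ∀ y, C.seed j y ∈ C.candidates j y) (y : G) :
    C.seed j (C.seed j y) = C.seed j y :=
  C.seed_congr (hj y).1

theorem mem_candidates_of_mem_seeds {j : ι} (hj : ∀ y, C.seed j y ∈ C.candidates j y)
    {p : G} (hp : p ∈ C.seeds j) : p ∈ C.candidates j p := by
  obtain ⟨y, rfl⟩ := C.seeds_eq j ▸ hp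
  rw [C.candidates_congr (hj y).1]
  exact hj y

theorem eq_of_mem_seeds {j : ι} (hj : ∀ y, C.seed j y ∈ C.candidates j y)
    {p q : G} (hp : p ∈ C.seeds j) (hq : q ∈ C.seeds j) (hpq : p * q⁻¹ ∈ C.stepGroup j) :
    p = q := by
  obtain ⟨y, rfl⟩ := C.seeds_eq j ▸ hp
  obtain ⟨y', rfl⟩ := C.seeds_eq j ▸ hq
  rw [← C.seed_seed hj y, ← C.seed_seed hj y']
  exact C.seed_congr hpq

/-- Only the finitely many levels `j` with `retract j z ∉ below j` can obstruct, and at each of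
them at most one `u ∈ base` does, since distinct seeds of a level lie in distinct cosets. -/
theorem finite_setOf_mul_retract_mem_seeds {i : ι}
    (ih : ∀ j < i, ∀ y, C.seed j y ∈ C.candidates j y) (z : G) :
    {u | u ∈ C.base ∧ ∃ j < i, u * C.retract j z ∈ C.seeds j}.Finite := by
  refine ((C.finite_setOf_retract_notMem_below z).biUnion fun j _ => Subsingleton.finite
    (?_ : {u | u ∈ C.base ∧ j < i ∧ u * C.retract j z ∈ C.seeds j}.Subsingleton)).subset ?_
  · rintro u ⟨hu, hj, hus⟩ u' ⟨hu', -, hus'⟩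
    refine mul_right_cancel (C.eq_of_mem_seeds (ih j hj) hus hus' ?_)
    simpa using C.base_le_stepGroup j (mul_mem hu (inv_mem hu'))
  · rintro u ⟨hu, j, hj, hus⟩
    refine mem_biUnion (fun hz => ?_) ⟨hu, hj, hus⟩
    exact (C.mem_candidates_of_mem_seeds (ih j hj) hus).2.1 (mul_mem (C.base_le_below j hu) hz)

theorem seed_mem_candidates (hK : (C.base : Set G).Infinite) (i : ι) (y : G) :
    C.seed i y ∈ C.candidates i y := by
  induction i using WellFoundedLT.induction generalizing y with
  | _ i ih =>
  obtain ⟨z, hzy, hz⟩ := C.exists_mul_inv_mem_stepGroup_notMem_below i y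
  obtain ⟨u, hu, hbad⟩ := hK.exists_notMem_finite (C.finite_setOf_mul_retract_mem_seeds ih z)
  refine Classical.epsilon_spec (p := (· ∈ C.candidates i y))
    ⟨u * z, ?_, ?_, fun j hj h => ?_⟩
  · rw [mul_assoc]
    exact mul_mem (C.base_le_stepGroup i hu) hzy
  · rwa [mul_mem_cancel_left (C.base_le_below i hu)]
  · rw [C.retract_mul (C.base_le_stage j hu)] at h
    exact hbad ⟨hu, j, hj, h⟩

def piece (i : ι) : Set G := C.retract i ⁻¹' C.seeds i

theorem isLeftAleph1Large_piece (hKc : (C.base : Set G).Countable)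
    (hK : (C.base : Set G).Infinite) (i : ι) : IsLeftAleph1Large (C.piece i) := by
  refine isLeftAleph1Large_of_forall_exists (C.countable_stepGroup hKc i) fun g => ?_
  set w := C.retract i g
  have hw : C.seed i w * w⁻¹ ∈ C.stepGroup i := (C.seed_mem_candidates hK i w).1
  refine ⟨w * (C.seed i w)⁻¹, by simpa using inv_mem hw, ?_⟩
  show C.retract i _ ∈ C.seeds i
  rw [mul_inv_rev, inv_inv, C.retract_mul (C.stepGroup_le_stage i hw), inv_mul_cancel_right,
    seeds_eq]
  exact mem_range_self w

theorem pairwise_disjoint_piece (hK : (C.base : Set G).Infinite) :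
    Pairwise (Disjoint on C.piece) := by
  refine (pairwise_disjoint_on _).2 fun i i' h => disjoint_left.2 fun x hx hx' => ?_
  have hcand := C.mem_candidates_of_mem_seeds (C.seed_mem_candidates hK i') hx'
  exact hcand.2.2 i h (by rwa [C.retract_retract h.le])

end StrictSubgroupChain

section Construction

universe u

variable {ι G : Type u} [LinearOrder ι] [Group G]

noncomputable def freshElt [WellFoundedLT ι] (K : Subgroup G) (e : ι → G) (i : ι) : G :=
  Classical.epsilon fun g => g ∉ Subgroup.closure (K ∪ ⋃ j < i, {e j, freshElt K e j})
termination_by i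

variable [WellFoundedLT ι]

theorem freshElt_notMem_closure (hG : ℵ₀ < #G) (hι : ∀ i : ι, #(Iio i) < #G) {K : Subgroup G}
    (hK : (K : Set G).Countable) (e : ι → G) (i : ι) :
    freshElt K e i ∉ Subgroup.closure (K ∪ ⋃ j < i, {e j, freshElt K e j}) := by
  rw [freshElt]
  refine Classical.epsilon_spec (Subgroup.exists_notMem_closure_of_max_lt (max_lt ?_ hG))
  have hsub : (K : Set G) ∪ ⋃ j < i, {e j, freshElt K e j} ⊆
      K ∪ (e '' Iio i ∪ freshElt K e '' Iio i) := by
    refine union_subset_union_right _ (iUnion₂_subset fun j hj => ?_)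
    exact insert_subset (Or.inl ⟨j, hj, rfl⟩) (singleton_subset_iff.2 (Or.inr ⟨j, hj, rfl⟩))
  refine (mk_le_mk_of_subset hsub).trans_lt ((mk_union_le _ _).trans_lt ?_)
  refine add_lt_of_lt hG.le (hK.le_aleph0.trans_lt hG) ((mk_union_le _ _).trans_lt ?_)
  exact add_lt_of_lt hG.le (mk_image_le.trans_lt (hι i)) (mk_image_le.trans_lt (hι i))

theorem exists_strictSubgroupChain (hG : ℵ₀ < #G) (hι : ∀ i : ι, #(Iio i) < #G)
    {e : ι → G} (he : Surjective e) {K : Subgroup G} (hK : (K : Set G).Countable) :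
    ∃ C : StrictSubgroupChain ι G, C.base = K :=
  ⟨{ base := K
     gen := fun i => {e i, freshElt K e i}
     exists_mem_gen := fun g => (he g).imp fun _ hi => Or.inl hi.symm
     new := freshElt K e
     new_mem_gen := fun _ => Or.inr rfl
     new_notMem_below := freshElt_notMem_closure hG hι hK e }, rfl⟩

end Construction

theorem exists_pairwise_disjoint_isLeftAleph1Large_of_aleph0_lt {G : Type*} [Group G]
    (hG : ℵ₀ < #G) :
    ∃ P : G → Set G, Pairwise (Disjoint on P) ∧ ∀ g, IsLeftAleph1Large (P g) := by
  have : Infinite G := infinite_iff.2 hG.le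
  obtain ⟨e⟩ : Nonempty ((#G).ord.ToType ≃ G) := Cardinal.eq.1 (by simp)
  have hKc := Subgroup.countable_closure (countable_range (Infinite.natEmbedding G))
  obtain ⟨C, hC⟩ := exists_strictSubgroupChain hG
    (fun i => by simpa using mk_Iio_lt i (by simp)) e.surjective hKc
  have hKi : (C.base : Set G).Infinite := hC ▸
    (infinite_range_of_injective (Infinite.natEmbedding G).injective).mono Subgroup.subset_closure
  exact ⟨fun g => C.piece (e.symm g), (C.pairwise_disjoint_piece hKi).comp_of_injective
    e.symm.injective, fun g => C.isLeftAleph1Large_piece (hC ▸ hKc) hKi _⟩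

theorem exists_pairwise_disjoint_isLeftAleph1Large (G : Type*) [Group G] :
    ∃ P : G → Set G, Pairwise (Disjoint on P) ∧ ∀ g, IsLeftAleph1Large (P g) := by
  rcases le_or_gt #G ℵ₀ with hG | hG
  · have : Countable G := mk_le_aleph0_iff.1 hG
    refine ⟨fun g => {g}, fun a b h => disjoint_singleton.2 h, fun g => ?_⟩
    exact isLeftAleph1Large_of_forall_exists countable_univ fun x => ⟨x * g⁻¹, trivial, by simp⟩
  · exact exists_pairwise_disjoint_isLeftAleph1Large_of_aleph0_lt hG

theorem infinite_group_partition_left_aleph1_large_general (G : Type*) [Group G] :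
    ∃ A : G → Set G,
      Pairwise (Function.onFun Disjoint A) ∧
      (⋃ g, A g) = Set.univ ∧
      ∀ g, ∃ F : Set G, F.Countable ∧ F * A g = Set.univ := by
  obtain ⟨P, hP, hlarge⟩ := exists_pairwise_disjoint_isLeftAleph1Large G
  obtain ⟨A, hA, hcover, hPA⟩ := exists_partition_of_pairwise_disjoint hP
  exact ⟨A, hA, hcover, fun g => (hlarge g).mono (hPA g)⟩

theorem infinite_group_partition_left_aleph1_large (G : Type*) [Group G] [Infinite G] :
    ∃ A : G → Set G,
      Pairwise (Function.onFun Disjoint A) ∧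
      (⋃ g, A g) = Set.univ ∧
      ∀ g, ∃ F : Set G, F.Countable ∧ F * A g = Set.univ :=
  infinite_group_partition_left_aleph1_large_general G
end

section
/- For any infinite cardinal κ, the free group F_κ on κ generators can be partitioned into κ pairwise disjoint left 3-large subsets; specifically, for each generator a, the set P_a of all reduced words whose first letter is a or a⁻¹ satisfies F_κ = {e, a}·P_a. -/
/-!
Let `P a` be the set of elements whose reduced word starts with `a` or `a⁻¹`. These sets are
pairwise disjoint and cover every element except `1`. If `g ∉ P a`, then the reduced word of `g`
does not start with `a`, so prepending `a⁻¹` causes no cancellation and `a⁻¹ g ∈ P a`; hence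
`g = a · (a⁻¹ g) ∈ {1, a} · P a`. Adding `1` to one of the sets yields the partition.
-/

open Pointwise Cardinal

section InsertPoint

variable {ι α : Type*} [DecidableEq ι]

theorem Pairwise.disjoint_update_insert {S : ι → Set α} {x : α}
    (hS : Pairwise (Function.onFun Disjoint S)) (hx : ∀ i, x ∉ S i) (i₀ : ι) :
    Pairwise (Function.onFun Disjoint (Function.update S i₀ (insert x (S i₀)))) := by
  have hleft : ∀ i j, i ≠ j → j ≠ i₀ →
      Disjoint (Function.update S i₀ (insert x (S i₀)) i) (S j) := by
    intro i j hij hj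
    rcases eq_or_ne i i₀ with rfl | hi
    · simpa using ⟨hx j, hS hij⟩
    · simpa [hi] using hS hij
  intro i j hij
  rcases eq_or_ne j i₀ with rfl | hj
  · rw [Function.onFun, Function.update_of_ne hij]
    exact (hleft j i hij.symm hij).symm
  · rw [Function.onFun, Function.update_of_ne hj]
    exact hleft i j hij hj

theorem Set.subset_update_insert (S : ι → Set α) (x : α) (i₀ i : ι) :
    S i ⊆ Function.update S i₀ (insert x (S i₀)) i := by
  rcases eq_or_ne i i₀ with rfl | h
  · simp
  · simp [h]

theorem Set.iUnion_update_insert (S : ι → Set α) (x : α) (i₀ : ι) :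
    ⋃ i, Function.update S i₀ (insert x (S i₀)) i = insert x (⋃ i, S i) := by
  refine Set.Subset.antisymm (Set.iUnion_subset fun i => ?_) ?_
  · rcases eq_or_ne i i₀ with rfl | h
    · simpa using Set.insert_subset_insert (Set.subset_iUnion S i)
    · simpa [h] using (Set.subset_iUnion S i).trans (Set.subset_insert x _)
  · refine Set.insert_subset ?_ (Set.iUnion_mono (Set.subset_update_insert S x i₀))
    exact Set.mem_iUnion.mpr ⟨i₀, by simp⟩

end InsertPoint

namespace FreeGroup

variable {ι : Type*} [DecidableEq ι]

def startsWithGen (a : ι) : Set (FreeGroup ι) :=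
  ⋃ b : Bool, startsWith (a, b)

theorem setOf_head?_eq_startsWithGen (a : ι) :
    {g : FreeGroup ι | ∃ b : Bool, g.toWord.head? = some (a, b)} = startsWithGen a := by
  ext g
  simp [startsWithGen, startsWith, List.head?_eq_getElem?]

theorem one_notMem_startsWithGen (a : ι) : (1 : FreeGroup ι) ∉ startsWithGen a := by
  simp [startsWithGen, startsWith, toWord_one]

theorem pairwise_disjoint_startsWithGen :
    Pairwise (Function.onFun Disjoint (startsWithGen (ι := ι))) := fun a a' h => by
  simp only [Function.onFun, startsWithGen, Set.disjoint_iUnion_left, Set.disjoint_iUnion_right,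
    startsWith.disjoint_iff_ne]
  simp [h]

theorem iUnion_startsWithGen : ⋃ a, startsWithGen a = ({1}ᶜ : Set (FreeGroup ι)) := by
  ext g
  simp only [startsWithGen, startsWith, Set.mem_iUnion, Set.mem_compl_singleton_iff,
    Set.mem_ofPred_eq, ← toWord_eq_nil_iff.not]
  rcases g.toWord with _ | ⟨⟨a, _ | _⟩, L⟩ <;> simp

theorem of_inv_mul_mem_startsWithGen {a : ι} {g : FreeGroup ι} (h : g ∉ startsWithGen a) :
    (of a)⁻¹ * g ∈ startsWithGen a :=
  Set.mem_iUnion.mpr ⟨false, startsWith_mk_mul (w := (a, false)) g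
    fun hg => h (Set.mem_iUnion.mpr ⟨true, hg⟩)⟩

theorem pair_mul_startsWithGen (a : ι) :
    ({1, of a} : Set (FreeGroup ι)) * startsWithGen a = Set.univ := by
  refine Set.eq_univ_of_forall fun g => ?_
  by_cases hg : g ∈ startsWithGen a
  · exact ⟨1, Set.mem_insert _ _, g, hg, one_mul g⟩
  · exact ⟨of a, Set.mem_insert_of_mem _ rfl, _, of_inv_mul_mem_startsWithGen hg,
      mul_inv_cancel_left _ _⟩

end FreeGroup

theorem Cardinal.mk_pair_lt_three {α : Type*} (x y : α) : #({x, y} : Set α) < 3 :=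
  calc #({x, y} : Set α) ≤ #({y} : Set α) + 1 := Cardinal.mk_insert_le
    _ < 3 := by rw [Cardinal.mk_singleton]; norm_num

theorem free_group_partition_left_three_large (ι : Type*) [DecidableEq ι] (κ : Cardinal)
    (hκ : κ = #ι) (hinf : Cardinal.aleph0 ≤ κ) :
    (∃ Q : ι → Set (FreeGroup ι),
      Pairwise (Function.onFun Disjoint Q) ∧
      (⋃ a, Q a) = Set.univ ∧
      ∀ a, ∃ F : Set (FreeGroup ι), #F < 3 ∧ F * Q a = Set.univ) ∧
    (∀ a : ι,
      ({1, FreeGroup.of a} : Set (FreeGroup ι)) *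
        {g : FreeGroup ι | ∃ b : Bool, (FreeGroup.toWord g).head? = some (a, b)} =
      Set.univ) := by
  obtain ⟨a₀⟩ : Nonempty ι := Cardinal.mk_ne_zero_iff.mp <| by
    rw [← hκ]; exact (aleph0_pos.trans_le hinf).ne'
  let P := FreeGroup.startsWithGen (ι := ι)
  have hP : ∀ a, ({1, FreeGroup.of a} : Set (FreeGroup ι)) * P a = Set.univ :=
    FreeGroup.pair_mul_startsWithGen
  refine ⟨⟨Function.update P a₀ (insert 1 (P a₀)),
    FreeGroup.pairwise_disjoint_startsWithGen.disjoint_update_insert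
      FreeGroup.one_notMem_startsWithGen a₀,
    ?_, fun a => ⟨{1, FreeGroup.of a}, mk_pair_lt_three _ _, ?_⟩⟩,
    fun a => FreeGroup.setOf_head?_eq_startsWithGen a ▸ hP a⟩
  · rw [Set.iUnion_update_insert, FreeGroup.iUnion_startsWithGen, Set.insert_eq,
      Set.union_compl_self]
  · exact Set.eq_univ_of_univ_subset <| hP a ▸
      Set.mul_subset_mul_left (Set.subset_update_insert P 1 a₀ a)
end

section
/- For any infinite cardinal κ, the free group F_κ on κ generators can be partitioned into κ pairwise disjoint 4-large subsets, i.e., subsets A each satisfying G = F·A and G = A·F' for some sets F, F' of cardinality at most 3. -/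
open Pointwise Cardinal

/-!
Colour a nontrivial reduced word by the generator of its first letter or of its last letter,
according to a parity bit built from its length and the exponent signs of these two letters.
Multiplying `w` on the left by `xᵢ^{±1}` either cancels a letter `xᵢ^{∓1}` or prepends `xᵢ^{±1}`:
this flips the length parity, leaves the last letter alone and lets us choose the first sign, so one
of `w`, `xᵢ w`, `xᵢ⁻¹ w` has colour `i`. Inversion reverses words and flips all signs, which keeps
the parity bit but swaps first and last letters; so the right-hand statement is the left-hand one
for the complementary colouring.
-/

theorem Set.mul_eq_univ_of_forall_exists_mul_mem {G : Type*} [Group G] {S A : Set G}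
    (hS : ∀ g ∈ S, g⁻¹ ∈ S) (h : ∀ w, ∃ g ∈ S, g * w ∈ A) : S * A = Set.univ :=
  Set.eq_univ_of_forall fun w => by
    obtain ⟨g, hg, hgw⟩ := h w
    exact ⟨g⁻¹, hS g hg, g * w, hgw, inv_mul_cancel_left g w⟩

theorem Set.mul_eq_univ_of_forall_exists_mul_mem' {G : Type*} [Group G] {S A : Set G}
    (hS : ∀ g ∈ S, g⁻¹ ∈ S) (h : ∀ w, ∃ g ∈ S, w * g ∈ A) : A * S = Set.univ :=
  Set.eq_univ_of_forall fun w => by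
    obtain ⟨g, hg, hwg⟩ := h w
    exact ⟨w * g, hwg, g⁻¹, hS g hg, mul_inv_cancel_right w g⟩

theorem Cardinal.mk_triple_le {α : Type*} (a b c : α) : #({a, b, c} : Set α) ≤ 3 :=
  calc #({a, b, c} : Set α) ≤ #({b, c} : Set α) + 1 := mk_insert_le
    _ ≤ #({c} : Set α) + 1 + 1 := by gcongr; exact mk_insert_le
    _ = 3 := by rw [mk_singleton]; norm_num

namespace FreeGroup

variable {ι : Type*}

def wordColor (e : Bool) (i₀ : ι) (L : List (ι × Bool)) : ι :=
  match L.head?, L.getLast? with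
  | some a, some z => if (L.length.bodd ^^ a.2 ^^ z.2) = e then a.1 else z.1
  | _, _ => i₀

theorem wordColor_of_head?_of_getLast? {e : Bool} {i₀ : ι} {L : List (ι × Bool)} {a z : ι × Bool}
    (ha : L.head? = some a) (hz : L.getLast? = some z) :
    wordColor e i₀ L = if (L.length.bodd ^^ a.2 ^^ z.2) = e then a.1 else z.1 := by
  simp only [wordColor, ha, hz]

theorem wordColor_invRev (e : Bool) (i₀ : ι) (L : List (ι × Bool)) :
    wordColor e i₀ (invRev L) = wordColor (!e) i₀ L := by
  rcases ha : L.head? with _ | a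
  · rw [List.head?_eq_none_iff.mp ha]
    rfl
  obtain ⟨z, hz⟩ : ∃ z, L.getLast? = some z :=
    Option.isSome_iff_exists.mp (by simp [List.getLast?_isSome, ← List.head?_eq_none_iff, ha])
  have hinv_head : (invRev L).head? = some (z.1, !z.2) := by
    rw [invRev, List.head?_reverse, List.getLast?_map, hz]
    rfl
  have hinv_last : (invRev L).getLast? = some (a.1, !a.2) := by
    rw [invRev, List.getLast?_reverse, List.head?_map, ha]
    rfl
  rw [wordColor_of_head?_of_getLast? ha hz, wordColor_of_head?_of_getLast? hinv_head hinv_last,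
    invRev, List.length_reverse, List.length_map]
  cases L.length.bodd <;> cases a.2 <;> cases z.2 <;> cases e <;> simp

theorem wordColor_eq_or_exists_cons (e : Bool) (i₀ i : ι) (L : List (ι × Bool)) :
    wordColor e i₀ L = i ∨
      ∃ b, (∀ a ∈ L.head?, a.1 = i → a.2 = b) ∧ wordColor e i₀ ((i, b) :: L) = i := by
  rcases L with _ | ⟨a, l⟩
  · exact Or.inr ⟨true, by simp, by simp [wordColor]⟩
  obtain ⟨z, hz⟩ : ∃ z, (a :: l).getLast? = some z := Option.isSome_iff_exists.mp (by simp)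
  have hcons : ∀ b, wordColor e i₀ ((i, b) :: a :: l) =
      if (!(a :: l).length.bodd ^^ b ^^ z.2) = e then i else z.1 := fun b => by
    rw [wordColor_of_head?_of_getLast? rfl (by rwa [List.getLast?_cons_cons]),
      List.length_cons, Nat.bodd_succ]
  by_cases ha : a.1 = i
  · by_cases hbit : ((a :: l).length.bodd ^^ a.2 ^^ z.2) = e
    · exact Or.inl (by rw [wordColor_of_head?_of_getLast? rfl hz, if_pos hbit, ha])
    · refine Or.inr ⟨a.2, by simp, ?_⟩
      rw [hcons, if_pos]
      revert hbit
      cases (a :: l).length.bodd <;> cases a.2 <;> cases z.2 <;> cases e <;> simp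
  · refine Or.inr ⟨e ^^ !(a :: l).length.bodd ^^ z.2, by simp [ha], ?_⟩
    rw [hcons, if_pos (by cases (a :: l).length.bodd <;> cases z.2 <;> cases e <;> rfl)]

def letters (i : ι) : Set (FreeGroup ι) :=
  {1, of i, (of i)⁻¹}

theorem mk_letters_le (i : ι) : #(letters i) ≤ 3 :=
  Cardinal.mk_triple_le _ _ _

theorem inv_mem_letters {i : ι} {g : FreeGroup ι} (hg : g ∈ letters i) : g⁻¹ ∈ letters i := by
  rcases hg with rfl | rfl | rfl <;> simp [letters]

variable [DecidableEq ι]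

theorem toWord_mk_singleton_mul {i : ι} {b : Bool} {w : FreeGroup ι}
    (h : ∀ a ∈ w.toWord.head?, a.1 = i → a.2 = b) :
    (mk [(i, b)] * w).toWord = (i, b) :: w.toWord := by
  rw [toWord_mul, toWord_mk, reduce_singleton, List.singleton_append]
  refine IsReduced.reduce_eq ?_
  rcases hw : w.toWord with _ | ⟨a, l⟩
  · exact IsReduced.singleton
  · refine isReduced_cons_cons.mpr ⟨fun hi => (h a (by simp [hw]) hi.symm).symm, ?_⟩
    rw [← hw]
    exact isReduced_toWord

def color (e : Bool) (i₀ : ι) (w : FreeGroup ι) : ι :=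
  wordColor e i₀ w.toWord

theorem color_inv (e : Bool) (i₀ : ι) (w : FreeGroup ι) : color e i₀ w⁻¹ = color (!e) i₀ w := by
  rw [color, toWord_inv, wordColor_invRev, color]

theorem exists_mem_letters_color_mul (e : Bool) (i₀ i : ι) (w : FreeGroup ι) :
    ∃ g ∈ letters i, color e i₀ (g * w) = i := by
  rcases wordColor_eq_or_exists_cons e i₀ i w.toWord with h | ⟨b, hb, h⟩
  · exact ⟨1, Or.inl rfl, by rwa [one_mul]⟩
  · refine ⟨mk [(i, b)], ?_, by rwa [color, toWord_mk_singleton_mul hb]⟩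
    cases b
    · exact Or.inr (Or.inr rfl)
    · exact Or.inr (Or.inl rfl)

theorem exists_mem_letters_color_mul' (e : Bool) (i₀ i : ι) (w : FreeGroup ι) :
    ∃ g ∈ letters i, color e i₀ (w * g) = i := by
  obtain ⟨g, hg, h⟩ := exists_mem_letters_color_mul (!e) i₀ i w⁻¹
  refine ⟨g⁻¹, inv_mem_letters hg, ?_⟩
  rwa [← inv_inv (w * g⁻¹), color_inv, mul_inv_rev, inv_inv]

end FreeGroup

open FreeGroup

theorem free_group_partition_four_large (ι : Type*) (hinf : Cardinal.aleph0 ≤ #ι) :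
    ∃ P : ι → Set (FreeGroup ι),
      Pairwise (Function.onFun Disjoint P) ∧
      (⋃ a, P a) = Set.univ ∧
      ∀ a, (∃ F : Set (FreeGroup ι), #F ≤ 3 ∧ F * P a = Set.univ) ∧
           (∃ F' : Set (FreeGroup ι), #F' ≤ 3 ∧ P a * F' = Set.univ) := by
  classical
  obtain ⟨i₀⟩ : Nonempty ι := Cardinal.mk_ne_zero_iff.mp (aleph0_pos.trans_le hinf).ne'
  refine ⟨fun i => color true i₀ ⁻¹' {i}, pairwise_disjoint_fiber _,
    Set.eq_univ_of_forall fun w => Set.mem_iUnion.mpr ⟨_, rfl⟩, fun i => ⟨?_, ?_⟩⟩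
  · exact ⟨letters i, mk_letters_le i, Set.mul_eq_univ_of_forall_exists_mul_mem
      (fun _ => inv_mem_letters) (exists_mem_letters_color_mul true i₀ i)⟩
  · exact ⟨letters i, mk_letters_le i, Set.mul_eq_univ_of_forall_exists_mul_mem'
      (fun _ => inv_mem_letters) (exists_mem_letters_color_mul' true i₀ i)⟩
end

section
/- Let G be a group, X a left 3-large subset of G (G = {e,x}·X for some x ∈ G), Y a right 3-large subset of G (G = Y·{e,y} for some y ∈ G), and suppose X ∩ Y = ∅. Then G = X ∪ Y. -/
open Pointwise

theorem disjoint_left_right_three_large_cover {G : Type*} [Group G] (X Y : Set G)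
    (hX : ∃ x : G, X ∪ x • X = Set.univ)
    (hY : ∃ y : G, Y ∪ Y * {y} = Set.univ)
    (hXY : X ∩ Y = ∅) :
    X ∪ Y = Set.univ := by
  obtain ⟨x, hx⟩ := hX
  obtain ⟨y, hy⟩ := hY
  -- membership helpers
  have hXc : ∀ g : G, g ∉ X → x⁻¹ * g ∈ X := by
    intro g hg
    have : g ∈ X ∪ x • X := hx ▸ Set.mem_univ g
    rcases this with h | h
    · exact absurd h hg
    · rcases h with ⟨a, ha, rfl⟩
      simpa using ha
  have hYc : ∀ g : G, g ∉ Y → g * y⁻¹ ∈ Y := by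
    intro g hg
    have : g ∈ Y ∪ Y * {y} := hy ▸ Set.mem_univ g
    rcases this with h | h
    · exact absurd h hg
    · rcases h with ⟨a, ha, b, hb, rfl⟩
      simp only [Set.mem_singleton_iff] at hb
      subst hb
      simpa using ha
  have hdisj : ∀ g : G, g ∈ X → g ∉ Y := by
    intro g hgX hgY
    have : g ∈ X ∩ Y := ⟨hgX, hgY⟩
    rw [hXY] at this
    exact this
  ext g
  simp only [Set.mem_union, Set.mem_univ, iff_true]
  by_contra h
  push_neg at h
  obtain ⟨hgX, hgY⟩ := h
  have h1 : x⁻¹ * g ∈ X := hXc g hgX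
  have h2 : g * y⁻¹ ∈ Y := hYc g hgY
  have h3 : x⁻¹ * g * y⁻¹ ∈ Y := hYc _ (hdisj _ h1)
  have h4 : x⁻¹ * (g * y⁻¹) ∈ X := hXc _ (fun hh => hdisj _ hh h2)
  exact hdisj _ h4 (by simpa [mul_assoc] using h3)
end

section
/- No group G can be partitioned into three or more pairwise disjoint nonempty subsets each of which is 3-large (both left and right 3-large). -/
/-!
If `A ∪ gA = G` then `A` contains `g⁻¹x` for every `x ∉ A`; if `B ∪ Bh = G` then `B` contains
`xh⁻¹` for every `x ∉ B`. For disjoint such `A`, `B` both missing `1` this gives `g⁻¹ ∈ A` and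
`h⁻¹ ∈ B`, hence `g⁻¹h⁻¹ ∈ A ∩ B`. So in a partition into 3-large cells at most one cell besides
the one containing `1` can exist.
-/

open Pointwise Cardinal

section ThreeLarge

variable {G : Type*} [Group G] {A B : Set G} {g h x : G}

lemma inv_mul_mem_of_union_smul_eq_univ (hA : A ∪ g • A = Set.univ) (hx : x ∉ A) :
    g⁻¹ * x ∈ A := by
  have hx' : x ∈ A ∪ g • A := hA ▸ Set.mem_univ x
  simpa [hx, Set.mem_smul_set_iff_inv_smul_mem] using hx'

lemma mul_inv_mem_of_union_mul_singleton_eq_univ (hB : B ∪ B * {h} = Set.univ) (hx : x ∉ B) :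
    x * h⁻¹ ∈ B := by
  have hx' : x ∈ B ∪ B * {h} := hB ▸ Set.mem_univ x
  simpa [hx, Set.mul_singleton, Set.image_mul_right] using hx'

lemma one_mem_or_one_mem_of_disjoint (hAB : Disjoint A B) (hA : A ∪ g • A = Set.univ)
    (hB : B ∪ B * {h} = Set.univ) : (1 : G) ∈ A ∨ (1 : G) ∈ B := by
  by_contra! h1
  have hgA : g⁻¹ ∈ A := by simpa using inv_mul_mem_of_union_smul_eq_univ hA h1.1
  have hhB : h⁻¹ ∈ B := by simpa using mul_inv_mem_of_union_mul_singleton_eq_univ hB h1.2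
  have hA' : g⁻¹ * h⁻¹ ∈ A :=
    inv_mul_mem_of_union_smul_eq_univ hA (Set.disjoint_right.mp hAB hhB)
  have hB' : g⁻¹ * h⁻¹ ∈ B :=
    mul_inv_mem_of_union_mul_singleton_eq_univ hB (Set.disjoint_left.mp hAB hgA)
  exact Set.disjoint_left.mp hAB hA' hB'

end ThreeLarge

theorem no_partition_into_three_three_large_general {G : Type*} [Group G]
    (P : Set (Set G))
    (hdisj : P.PairwiseDisjoint id)
    (hcov : ⋃₀ P = Set.univ)
    (hlarge : ∀ A ∈ P, (∃ g : G, A ∪ g • A = Set.univ) ∧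
                        (∃ h : G, A ∪ A * {h} = Set.univ)) :
    #P ≤ 2 := by
  obtain ⟨D, hDP, h1D⟩ : (1 : G) ∈ ⋃₀ P := hcov ▸ Set.mem_univ 1
  have h1 : ∀ E ∈ P \ {D}, (1 : G) ∉ E := fun E hE h1E =>
    Set.disjoint_left.mp (hdisj hE.1 hDP hE.2) h1E h1D
  have hrest : (P \ {D}).Subsingleton := by
    intro X hX Y hY
    by_contra hXY
    obtain ⟨g, hg⟩ := (hlarge X hX.1).1
    obtain ⟨h, hh⟩ := (hlarge Y hY.1).2
    rcases one_mem_or_one_mem_of_disjoint (hdisj hX.1 hY.1 hXY) hg hh with hX1 | hY1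
    exacts [h1 X hX hX1, h1 Y hY hY1]
  calc #P = #(insert D (P \ {D}) : Set (Set G)) := by
        rw [Set.insert_sdiff_singleton, Set.insert_eq_of_mem hDP]
    _ ≤ #(P \ {D} : Set (Set G)) + 1 := mk_insert_le
    _ ≤ 1 + 1 := by gcongr; exact mk_le_one_iff_set_subsingleton.2 hrest
    _ = 2 := one_add_one_eq_two

theorem no_partition_into_three_three_large {G : Type*} [Group G]
    (P : Set (Set G))
    (hdisj : P.PairwiseDisjoint id)
    (hne : ∀ A ∈ P, A.Nonempty)
    (hcov : ⋃₀ P = Set.univ)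
    (hlarge : ∀ A ∈ P, (∃ g : G, A ∪ g • A = Set.univ) ∧
                        (∃ h : G, A ∪ A * {h} = Set.univ)) :
    #P ≤ 2 :=
  no_partition_into_three_three_large_general P hdisj hcov hlarge
end

section
/- For every natural number n ≥ 2, the free group F_n can be partitioned into countably many pairwise disjoint 5-large subsets. -/
/-!
Colour an element of a free group by the length of the initial run of a generator `a` in its
reduced word if that word has even length, and by the length of its final run of `a` if it has odd
length. Given a colour `m` and any `g`, one of the four words `aᵐ b s` with `s ∈ {1, b, a, a²}`
can be put in front of `g` without cancellation so that the product has even length: the pads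
cover both parities, and `b` and `a` cannot both cancel against the first letter of `g`. The
product then has colour `m`. Right translates are handled by the same argument applied to inverses,
with `a⁻¹` in place of `a` and odd length in place of even.
-/

open Pointwise Cardinal

theorem Cardinal.mk_range_fin_le {β : Type*} {k : ℕ} (f : Fin k → β) : #(Set.range f) ≤ k := by
  simpa using Cardinal.mk_range_le_lift (f := f)

theorem List.takeWhile_replicate_append {β : Type*} [DecidableEq β] {u v : β} (huv : u ≠ v)
    (m : ℕ) (L : List β) :
    (List.replicate m u ++ v :: L).takeWhile (· = u) = List.replicate m u := by
  induction m with
  | zero => simp [huv.symm]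
  | succ m ih => simp [List.replicate_succ, ih]

namespace FreeGroup

variable {α : Type*}

theorem isReduced_cons_or_isReduced_cons {u v : α × Bool} (huv : u.1 ≠ v.1)
    {L : List (α × Bool)} (hL : IsReduced L) : IsReduced (u :: L) ∨ IsReduced (v :: L) := by
  cases L with
  | nil => simp
  | cons x L =>
    simp only [isReduced_cons_cons, hL, and_true]
    by_contra! h
    exact huv (h.1.1.trans h.2.1.symm)

theorem isReduced_replicate_append {u v : α × Bool} (huv : u.1 ≠ v.1) (m : ℕ)
    {L : List (α × Bool)} (hL : IsReduced (v :: L)) :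
    IsReduced (List.replicate m u ++ v :: L) := by
  refine List.isChain_append.mpr ⟨List.isChain_replicate_of_rel m fun _ => rfl, hL, ?_⟩
  rintro x hx _ ⟨⟩ hxv
  rw [List.eq_of_mem_replicate (List.mem_of_getLast? hx)] at hxv
  exact absurd hxv huv

def pad (u v : α × Bool) : Fin 4 → List (α × Bool) := ![[], [v], [u], [u, u]]

theorem exists_pad {u v : α × Bool} (huv : u.1 ≠ v.1) {L : List (α × Bool)} (hL : IsReduced L)
    (n : ℕ) (P : Prop) :
    ∃ i, IsReduced (v :: (pad u v i ++ L)) ∧ (Even (n + (pad u v i).length) ↔ P) := by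
  by_cases hP : Even n ↔ P
  · rcases isReduced_cons_or_isReduced_cons huv hL with hu | hv
    · exact ⟨3, by simpa [pad, huv.symm] using hu, by simpa [pad, Nat.even_add] using hP⟩
    · exact ⟨0, by simpa [pad] using hv, by simpa [pad] using hP⟩
  · rcases isReduced_cons_or_isReduced_cons huv hL with hu | hv
    · exact ⟨2, by simpa [pad, huv.symm] using hu,
        by simpa [pad, Nat.even_add_one] using not_iff.mp hP⟩
    · exact ⟨1, by simpa [pad] using hv, by simpa [pad, Nat.even_add_one] using not_iff.mp hP⟩

section DecidableEq

variable [DecidableEq α]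

theorem toWord_mk_mul_of_isReduced {L : List (α × Bool)} {y : FreeGroup α}
    (h : IsReduced (L ++ y.toWord)) : (mk L * y).toWord = L ++ y.toWord := by
  rw [← mk_toWord (x := y), mul_mk, toWord_mk, mk_toWord, h.reduce_eq]

def leadingRun (u : α × Bool) (x : FreeGroup α) : ℕ := (x.toWord.takeWhile (· = u)).length

def marker (u v : α × Bool) (m : ℕ) (i : Fin 4) : FreeGroup α :=
  mk (List.replicate m u ++ v :: pad u v i)

theorem exists_leadingRun_marker_mul {u v : α × Bool} (huv : u.1 ≠ v.1) (m : ℕ)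
    (g : FreeGroup α) (P : Prop) :
    ∃ i, leadingRun u (marker u v m i * g) = m ∧ (Even (marker u v m i * g).norm ↔ P) := by
  obtain ⟨i, hred, hpar⟩ := exists_pad huv isReduced_toWord (m + 1 + g.norm) P
  have hword :
      (marker u v m i * g).toWord = List.replicate m u ++ v :: (pad u v i ++ g.toWord) := by
    rw [marker, toWord_mk_mul_of_isReduced] <;> simp only [List.append_assoc, List.cons_append]
    exact isReduced_replicate_append huv m hred
  refine ⟨i, ?_, ?_⟩
  · rw [leadingRun, hword, List.takeWhile_replicate_append (ne_of_apply_ne Prod.fst huv),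
      List.length_replicate]
  · rw [norm, hword]
    convert hpar using 2
    simp only [List.length_append, List.length_replicate, List.length_cons, norm]
    ring

-- `leadingRun (a, false) x⁻¹` is the length of the final run of `a` in `x`.
def parityRunColoring (a : α) (x : FreeGroup α) : ℕ :=
  if Even x.norm then leadingRun (a, true) x else leadingRun (a, false) x⁻¹

variable {a b : α}

theorem exists_mul_parityRunColoring_fiber_eq_univ (hab : a ≠ b) (m : ℕ) :
    ∃ F : Set (FreeGroup α), #F ≤ 4 ∧ F * (parityRunColoring a ⁻¹' {m}) = Set.univ := by
  refine ⟨Set.range fun i => (marker (a, true) (b, true) m i)⁻¹, Cardinal.mk_range_fin_le _,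
    Set.eq_univ_of_forall fun g => ?_⟩
  obtain ⟨i, hrun, heven⟩ :=
    exists_leadingRun_marker_mul (u := (a, true)) (v := (b, true)) hab m g True
  refine Set.mem_mul.mpr ⟨_, ⟨i, rfl⟩, _, ?_, inv_mul_cancel_left _ g⟩
  rw [Set.mem_preimage, Set.mem_singleton_iff, parityRunColoring, if_pos (heven.mpr trivial), hrun]

theorem exists_parityRunColoring_fiber_mul_eq_univ (hab : a ≠ b) (m : ℕ) :
    ∃ F : Set (FreeGroup α), #F ≤ 4 ∧ parityRunColoring a ⁻¹' {m} * F = Set.univ := by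
  refine ⟨Set.range fun i => marker (a, false) (b, true) m i, Cardinal.mk_range_fin_le _,
    Set.eq_univ_of_forall fun g => ?_⟩
  obtain ⟨i, hrun, hodd⟩ :=
    exists_leadingRun_marker_mul (u := (a, false)) (v := (b, true)) hab m g⁻¹ False
  refine Set.mem_mul.mpr ⟨(marker (a, false) (b, true) m i * g⁻¹)⁻¹, ?_, _, ⟨i, rfl⟩, by group⟩
  rw [Set.mem_preimage, Set.mem_singleton_iff, parityRunColoring, norm_inv_eq, if_neg hodd.mp,
    inv_inv, hrun]

end DecidableEq

end FreeGroup

theorem free_group_fin_partition_five_large (n : ℕ) (hn : 2 ≤ n) :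
    ∃ P : ℕ → Set (FreeGroup (Fin n)),
      Pairwise (Function.onFun Disjoint P) ∧
      (⋃ m, P m) = Set.univ ∧
      ∀ m, (∃ F : Set (FreeGroup (Fin n)), #F ≤ 4 ∧ F * P m = Set.univ) ∧
           (∃ F' : Set (FreeGroup (Fin n)), #F' ≤ 4 ∧ P m * F' = Set.univ) := by
  let a : Fin n := ⟨0, by omega⟩
  have hab : a ≠ ⟨1, by omega⟩ := by simp [a, Fin.ext_iff]
  refine ⟨fun m => FreeGroup.parityRunColoring a ⁻¹' {m}, pairwise_disjoint_fiber _,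
    Set.iUnion_eq_univ_iff.mpr fun x => ⟨_, rfl⟩, fun m =>
      ⟨FreeGroup.exists_mul_parityRunColoring_fiber_eq_univ hab m,
        FreeGroup.exists_parityRunColoring_fiber_mul_eq_univ hab m⟩⟩
end

section
/- Let G be an amenable group. Then G cannot be partitioned into uncountably many pairwise disjoint left ℵ₀-large subsets; indeed, any family of pairwise disjoint left ℵ₀-large subsets of G is at most countable. -/
/-!
An invariant mean `μ` assigns positive mass to every syndetic set `A`: finitely many translates
`g • A` cover `G`, so `1 ≤ |F| μ A`. By finite additivity, the masses of pairwise disjoint sets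
have partial sums bounded by `μ univ`, so they form a summable family, and a summable family of
reals has countable support.
-/

open Pointwise

section Content

open Function

variable {α ι : Type*} {μ : Set α → ℝ}

theorem content_empty (hadd : ∀ A B : Set α, Disjoint A B → μ (A ∪ B) = μ A + μ B) :
    μ ∅ = 0 := by
  simpa using hadd ∅ ∅ disjoint_bot_left

theorem content_mono (hnonneg : ∀ A : Set α, 0 ≤ μ A)
    (hadd : ∀ A B : Set α, Disjoint A B → μ (A ∪ B) = μ A + μ B) {A B : Set α} (h : A ⊆ B) :
    μ A ≤ μ B := by
  have := hadd A (B \ A) disjoint_sdiff_self_right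
  rw [Set.union_sdiff_cancel h] at this
  linarith [hnonneg (B \ A)]

theorem content_union_le (hnonneg : ∀ A : Set α, 0 ≤ μ A)
    (hadd : ∀ A B : Set α, Disjoint A B → μ (A ∪ B) = μ A + μ B) (A B : Set α) :
    μ (A ∪ B) ≤ μ A + μ B := by
  have := hadd A (B \ A) disjoint_sdiff_self_right
  rw [Set.union_sdiff_self] at this
  linarith [content_mono hnonneg hadd (Set.sdiff_subset : B \ A ⊆ B)]

theorem content_biUnion_le_sum (hnonneg : ∀ A : Set α, 0 ≤ μ A)
    (hadd : ∀ A B : Set α, Disjoint A B → μ (A ∪ B) = μ A + μ B) (s : Finset ι) (f : ι → Set α) :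
    μ (⋃ i ∈ s, f i) ≤ ∑ i ∈ s, μ (f i) := by
  classical
  induction s using Finset.induction_on with
  | empty => simp [content_empty hadd]
  | insert a s ha ih =>
    rw [Finset.set_biUnion_insert, Finset.sum_insert ha]
    linarith [content_union_le hnonneg hadd (f a) (⋃ i ∈ s, f i)]

theorem content_biUnion_eq_sum (hadd : ∀ A B : Set α, Disjoint A B → μ (A ∪ B) = μ A + μ B)
    {s : Finset ι} {f : ι → Set α} (hs : (s : Set ι).PairwiseDisjoint f) :
    μ (⋃ i ∈ s, f i) = ∑ i ∈ s, μ (f i) := by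
  classical
  induction s using Finset.induction_on with
  | empty => simp [content_empty hadd]
  | insert a s ha ih =>
    rw [Finset.coe_insert] at hs
    have hdisj : Disjoint (f a) (⋃ i ∈ s, f i) :=
      Set.disjoint_iUnion₂_right.2 fun i hi =>
        hs (Set.mem_insert a _) (Set.mem_insert_of_mem a hi) (ne_of_mem_of_not_mem hi ha).symm
    rw [Finset.set_biUnion_insert, Finset.sum_insert ha, hadd _ _ hdisj,
      ih (hs.subset (Set.subset_insert a _))]

theorem countable_setOf_content_pos (hnonneg : ∀ A : Set α, 0 ≤ μ A)
    (hadd : ∀ A B : Set α, Disjoint A B → μ (A ∪ B) = μ A + μ B) {f : ι → Set α}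
    (hf : Pairwise (Disjoint on f)) :
    {i | 0 < μ (f i)}.Countable := by
  have hsum : Summable fun i => μ (f i) :=
    summable_of_sum_le (c := μ Set.univ) (fun i => hnonneg (f i)) fun s => by
      rw [← content_biUnion_eq_sum hadd (hf.set_pairwise _)]
      exact content_mono hnonneg hadd (Set.subset_univ _)
  exact hsum.countable_support.mono fun _ hi => hi.ne'

theorem content_pos_of_smul_eq_univ {G : Type*} [SMul G α] (hnonneg : ∀ A : Set α, 0 ≤ μ A)
    (hadd : ∀ A B : Set α, Disjoint A B → μ (A ∪ B) = μ A + μ B)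
    (hinv : ∀ (g : G) (A : Set α), μ (g • A) = μ A) (huniv : 0 < μ Set.univ)
    {F : Set G} (hF : F.Finite) {A : Set α} (hFA : F • A = Set.univ) :
    0 < μ A := by
  have hcover : μ Set.univ ≤ hF.toFinset.card * μ A :=
    calc μ Set.univ = μ (⋃ g ∈ hF.toFinset, g • A) := by
          simp only [Set.Finite.mem_toFinset, Set.iUnion_smul_left_image, hFA]
      _ ≤ ∑ g ∈ hF.toFinset, μ (g • A) := content_biUnion_le_sum hnonneg hadd _ _
      _ = hF.toFinset.card * μ A := by simp [hinv]
  exact pos_of_mul_pos_right (huniv.trans_le hcover) (Nat.cast_nonneg _)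

end Content

theorem amenable_disjoint_syndetic_countable {G : Type*} [Group G]
    (μ : Set G → ℝ)
    (hnonneg : ∀ A : Set G, 0 ≤ μ A)
    (hone : μ Set.univ = 1)
    (hadd : ∀ A B : Set G, Disjoint A B → μ (A ∪ B) = μ A + μ B)
    (hinv : ∀ (g : G) (A : Set G), μ (g • A) = μ A)
    (P : Set (Set G))
    (hdisj : P.PairwiseDisjoint id)
    (hlarge : ∀ A ∈ P, ∃ F : Set G, F.Finite ∧ F * A = Set.univ) :
    P.Countable := by
  have hpos : ∀ A : P, 0 < μ A := fun ⟨A, hA⟩ => by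
    obtain ⟨F, hF, hFA⟩ := hlarge A hA
    exact content_pos_of_smul_eq_univ hnonneg hadd hinv (hone ▸ one_pos) hF hFA
  have hcount := countable_setOf_content_pos hnonneg hadd (f := ((↑) : P → Set G))
    (hdisj.subtype _ _)
  simp only [hpos, Set.ofPred_true, Set.countable_univ_iff] at hcount
  exact Set.countable_coe_iff.1 hcount
end

section
/- Let X be an infinite set of cardinality κ and let G be the group of all permutations of X with finite support, acting on X. If Y ⊆ X satisfies |X \ Y| = κ, then Y is not κ-large: for every F ⊆ G with |F| < κ, we have F·Y ≠ X. Consequently, X cannot be partitioned into two κ-large subsets. -/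
/-!
A permutation `f` maps `Y` into `Y ∪ supp f`, so `⋃ f ∈ F, f '' Y ⊆ Y ∪ ⋃ f ∈ F, supp f`. When
`#F < κ` and every support is finite, the union of the supports has cardinality `< κ`, hence cannot
contain `Yᶜ` once `#Yᶜ = κ`. Of two complementary sets, one has complement of cardinality `κ`, so
they cannot both be `κ`-large.
-/

open Cardinal

universe u

theorem Cardinal.mk_biUnion_lt_of_finite {ι α : Type u} {s : Set ι} {t : ι → Set α}
    {κ : Cardinal.{u}} (hκ : ℵ₀ ≤ κ) (hs : #s < κ) (ht : ∀ i ∈ s, (t i).Finite) :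
    #(⋃ i ∈ s, t i) < κ := by
  rcases s.finite_or_infinite with hfin | hinf
  · exact ((hfin.biUnion ht).lt_aleph0).trans_le hκ
  · have hs₀ : ℵ₀ ≤ #s := infinite_iff.mp hinf.to_subtype
    calc #(⋃ i ∈ s, t i) ≤ #s * ℵ₀ :=
          (mk_biUnion_le t s).trans <| by
            gcongr; exact ciSup_le' fun i => (ht i i.2).lt_aleph0.le
      _ < κ := mul_lt_of_lt hκ hs (hs₀.trans_lt hs)

theorem Function.Injective.image_subset_union_setOf_apply_ne {α : Type*} {f : α → α}
    (hf : f.Injective) (Y : Set α) : f '' Y ⊆ Y ∪ {x | f x ≠ x} := by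
  rintro _ ⟨y, hy, rfl⟩
  by_cases hfy : f y = y
  · exact .inl (by rwa [hfy])
  · exact .inr fun h => hfy (hf h)

theorem compl_subset_biUnion_setOf_apply_ne {α : Type*} {Y : Set α} {F : Set (Equiv.Perm α)}
    (hcov : ⋃ f ∈ F, f '' Y = Set.univ) : Yᶜ ⊆ ⋃ f ∈ F, {x | f x ≠ x} := by
  intro x hx
  obtain ⟨f, hf, hxf⟩ := Set.mem_iUnion₂.mp (hcov ▸ Set.mem_univ x)
  obtain hxY | hxf := f.injective.image_subset_union_setOf_apply_ne Y hxf
  · exact absurd hxY hx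
  · exact Set.mem_biUnion hf hxf

theorem iUnion_image_ne_univ_of_mk_compl_eq {X : Type u} [Infinite X] {Y : Set X}
    (hY : #(↥Yᶜ) = #X) {F : Set (Equiv.Perm X)} (hfin : ∀ f ∈ F, {x | f x ≠ x}.Finite)
    (hF : #F < #X) : ⋃ f ∈ F, f '' Y ≠ Set.univ := fun hcov =>
  (mk_biUnion_lt_of_finite (aleph0_le_mk X) hF hfin).not_ge <|
    hY ▸ mk_le_mk_of_subset (compl_subset_biUnion_setOf_apply_ne hcov)

theorem mk_eq_or_mk_compl_eq {X : Type u} [Infinite X] (Y : Set X) :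
    #Y = #X ∨ #(↥Yᶜ) = #X :=
  (mk_set_le Y).eq_or_lt.imp_right (mk_compl_of_infinite Y)

theorem finitary_perm_not_kappa_large (X : Type*) [Infinite X] :
    (∀ Y : Set X, #(↥Yᶜ) = #X →
      ∀ F : Set (Equiv.Perm X), (∀ f ∈ F, {x : X | f x ≠ x}.Finite) → #F < #X →
        (⋃ f ∈ F, f '' Y) ≠ Set.univ) ∧
    ¬ ∃ Y₁ Y₂ : Set X, Disjoint Y₁ Y₂ ∧ Y₁ ∪ Y₂ = Set.univ ∧
        (∃ F : Set (Equiv.Perm X), (∀ f ∈ F, {x : X | f x ≠ x}.Finite) ∧ #F < #X ∧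
          (⋃ f ∈ F, f '' Y₁) = Set.univ) ∧
        (∃ F : Set (Equiv.Perm X), (∀ f ∈ F, {x : X | f x ≠ x}.Finite) ∧ #F < #X ∧
          (⋃ f ∈ F, f '' Y₂) = Set.univ) := by
  refine ⟨fun Y hY F hfin hF => iUnion_image_ne_univ_of_mk_compl_eq hY hfin hF, ?_⟩
  rintro ⟨Y₁, Y₂, hdisj, hunion, ⟨F₁, hfin₁, hF₁, hcov₁⟩, ⟨F₂, hfin₂, hF₂, hcov₂⟩⟩
  have hcompl : Y₁ᶜ = Y₂ := IsCompl.compl_eq ⟨hdisj, codisjoint_iff.mpr hunion⟩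
  rcases mk_eq_or_mk_compl_eq Y₁ with hY₁ | hY₁
  · exact iUnion_image_ne_univ_of_mk_compl_eq (by rwa [← hcompl, compl_compl]) hfin₂ hF₂ hcov₂
  · exact iUnion_image_ne_univ_of_mk_compl_eq hY₁ hfin₁ hF₁ hcov₁
end

section
/- Let G be a group. Any family of pairwise disjoint shifted subgroups of finite index of G (sets of the form aHb with [G:H] finite) is at most countable. -/
/-!
A shifted subgroup `a H b` is the left coset `(a b) (b⁻¹ H b)`, and conjugation preserves the
index, so it suffices to show that for every `n` a disjoint family of left cosets of subgroups of
index at most `n` has at most `n` members. Given finitely many such cosets `gᵢ Hᵢ`, the subgroup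
`M = ⋂ Hᵢ` still has finite index, each `gᵢ Hᵢ` is the union of `[Hᵢ : M] = [G : M] / [G : Hᵢ]`
left cosets of `M`, and disjointness makes all these cosets of `M` distinct. Hence
`k [G : M] / n ≤ [G : M]`, i.e. `k ≤ n`.
-/

open Function Pointwise

namespace Subgroup

variable {G : Type*} [Group G]

theorem sum_relIndex_le_index_of_pairwiseDisjoint {ι : Type*} [Fintype ι] {M : Subgroup G}
    [M.FiniteIndex] {H : ι → Subgroup G} (g : ι → G) (hMH : ∀ i, M ≤ H i)
    (hdisj : Pairwise (Disjoint on fun i ↦ g i • (H i : Set G))) :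
    ∑ i, M.relIndex (H i) ≤ M.index := by
  let φ : (Σ i, H i ⧸ M.subgroupOf (H i)) → G ⧸ M := fun p ↦
    Quotient.liftOn' p.2 (fun k ↦ ((g p.1 * k : G) : G ⧸ M)) fun k k' hkk' ↦ by
      rw [QuotientGroup.eq]
      simpa [mul_assoc, mem_subgroupOf] using QuotientGroup.leftRel_apply.mp hkk'
  have hφ : Injective φ := by
    rintro ⟨i, q⟩ ⟨j, q'⟩ h
    induction q using QuotientGroup.induction_on with | H k => ?_
    induction q' using QuotientGroup.induction_on with | H k' => ?_
    have hM : (g i * k)⁻¹ * (g j * k') ∈ M := QuotientGroup.eq.mp h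
    obtain rfl : i = j := by
      by_contra hij
      refine Set.disjoint_left.mp (hdisj hij) ⟨k * ((g i * k)⁻¹ * (g j * k')), ?_, ?_⟩
        ⟨k', k'.2, rfl⟩
      · exact mul_mem k.2 (hMH i hM)
      · simp [mul_assoc]
    simp only [Sigma.mk.injEq, heq_eq_eq, true_and]
    rw [QuotientGroup.eq, mem_subgroupOf]
    simpa [mul_assoc] using hM
  calc ∑ i, M.relIndex (H i) = Nat.card (Σ i, H i ⧸ M.subgroupOf (H i)) := by
        rw [Nat.card_sigma]; rfl
    _ ≤ M.index := Nat.card_le_card_of_injective φ hφ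

theorem card_le_of_pairwiseDisjoint_leftCoset {ι : Type*} [Fintype ι] {H : ι → Subgroup G}
    (g : ι → G) (hH : ∀ i, (H i).FiniteIndex) {n : ℕ} (hn : ∀ i, (H i).index ≤ n)
    (hdisj : Pairwise (Disjoint on fun i ↦ g i • (H i : Set G))) :
    Fintype.card ι ≤ n := by
  set M := ⨅ i, H i
  have : M.FiniteIndex := finiteIndex_iInf hH
  have hMH (i : ι) : M ≤ H i := iInf_le H i
  refine Nat.le_of_mul_le_mul_right ?_ (Nat.pos_of_ne_zero (FiniteIndex.index_ne_zero (H := M)))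
  calc Fintype.card ι * M.index
      = ∑ i, M.relIndex (H i) * (H i).index := by
        simp only [relIndex_mul_index (hMH _), Finset.sum_const, Finset.card_univ, smul_eq_mul]
    _ ≤ ∑ i, M.relIndex (H i) * n := by gcongr; exact hn _
    _ = (∑ i, M.relIndex (H i)) * n := (Finset.sum_mul ..).symm
    _ ≤ M.index * n := by gcongr; exact sum_relIndex_le_index_of_pairwiseDisjoint g hMH hdisj
    _ = n * M.index := mul_comm ..

theorem finite_of_pairwiseDisjoint_leftCoset_index_le {P : Set (Set G)} (n : ℕ)
    (hP : ∀ A ∈ P, ∃ (g : G) (H : Subgroup G), H.FiniteIndex ∧ H.index ≤ n ∧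
      A = g • (H : Set G))
    (hdisj : P.PairwiseDisjoint id) :
    P.Finite := by
  by_contra hinf
  obtain ⟨S, hSP, hS⟩ := Set.Infinite.exists_subset_card_eq hinf (n + 1)
  choose g H hH hn hA using fun A : S ↦ hP A (hSP A.2)
  have hdisj' : Pairwise (Disjoint on fun A : S ↦ g A • (H A : Set G)) := fun A B hAB ↦ by
    rw [onFun, ← hA, ← hA]
    exact hdisj (hSP A.2) (hSP B.2) (Subtype.coe_injective.ne hAB)
  have hcard := card_le_of_pairwiseDisjoint_leftCoset g hH hn hdisj'
  rw [Fintype.card_coe, hS] at hcard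
  omega

theorem singleton_mul_mul_singleton_eq_smul_map_conj (a b : G) (H : Subgroup G) :
    {a} * (H : Set G) * {b} = (a * b) • (H.map (MulAut.conj b⁻¹ : G →* G) : Set G) := by
  ext x
  simp only [Set.singleton_mul, Set.mul_singleton, Set.image_mul_left, Set.image_mul_right,
    Set.mem_preimage, Set.mem_smul_set_iff_inv_smul_mem, coe_map, Set.mem_image,
    SetLike.mem_coe, MonoidHom.coe_coe, MulAut.conj_apply, smul_eq_mul]
  constructor
  · exact fun hx ↦ ⟨_, hx, by group⟩
  · rintro ⟨h, hh, hx⟩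
    obtain rfl := eq_inv_mul_iff_mul_eq.mp hx
    convert hh using 1
    group

end Subgroup

theorem disjoint_shifted_subgroups_countable {G : Type*} [Group G]
    (P : Set (Set G))
    (hshift : ∀ A ∈ P, ∃ (a b : G) (H : Subgroup G), H.FiniteIndex ∧
      A = {a} * (H : Set G) * {b})
    (hdisj : P.PairwiseDisjoint id) :
    P.Countable := by
  let P' (n : ℕ) : Set (Set G) := {A ∈ P | ∃ (g : G) (H : Subgroup G), H.FiniteIndex ∧
    H.index ≤ n ∧ A = g • (H : Set G)}
  have hP' (n : ℕ) : (P' n).Countable :=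
    (Subgroup.finite_of_pairwiseDisjoint_leftCoset_index_le n (fun _ hA ↦ hA.2)
      (hdisj.subset fun _ hA ↦ hA.1)).countable
  refine (Set.countable_iUnion hP').mono fun A hA ↦ ?_
  obtain ⟨a, b, H, hH, rfl⟩ := hshift A hA
  have hK := H.index_map_equiv (MulAut.conj b⁻¹)
  exact Set.mem_iUnion.mpr ⟨H.index, hA, a * b, _, ⟨hK ▸ hH.index_ne_zero⟩, hK.le,
    Subgroup.singleton_mul_mul_singleton_eq_smul_map_conj a b H⟩
end
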